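/- With Ω₁^π, Ω₂^π the 1-forms of Theorem 2 and π the Kirillov–Kostant bivector on g*, the following identities hold for y₁, y₂ ∈ g: Ω₁^π([π,e^{y₁}], e^{y₂}) = ⟨[y₁, ω₁(y₁,y₂)], ∂_{y₁}⟩(e^{y₁}) ⊗ e^{y₂} + tr_g( ad(y₁) ∂_{y₁}ω₁(y₁,y₂) ) e^{y₁} ⊗ e^{y₂}, and Ω₂^π(e^{y₁}, [π,e^{y₂}]) = e^{y₁} ⊗ ⟨[y₂, ω₂(y₁,y₂)], ∂_{y₂}⟩(e^{y₂}) + tr_g( ad(y₂) ∂_{y₂}ω₂(y₁,y₂) ) e^{y₁} ⊗ e^{y₂}, where (ω₁, ω₂) is the Alekseev–Torossian connection. -/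

import Mathlib

/-!
# Statement 12 (`Ω_i^π` applied to Hamiltonian vector fields of exponentials)

With `Ω₁^π, Ω₂^π` the `1`-forms of Theorem 2 and `π` the Kirillov–Kostant bivector on
`g*`, the following identities hold for `y₁, y₂ ∈ g`:

`Ω₁^π([π,e^{y₁}], e^{y₂}) = ⟨[y₁, ω₁(y₁,y₂)], ∂_{y₁}⟩(e^{y₁}) ⊗ e^{y₂}
                          + tr_g(ad(y₁) ∂_{y₁}ω₁(y₁,y₂)) e^{y₁} ⊗ e^{y₂}`,
`Ω₂^π(e^{y₁}, [π,e^{y₂}]) = e^{y₁} ⊗ ⟨[y₂, ω₂(y₁,y₂)], ∂_{y₂}⟩(e^{y₂})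
                          + tr_g(ad(y₂) ∂_{y₂}ω₂(y₁,y₂)) e^{y₁} ⊗ e^{y₂}`,

where `(ω₁, ω₂)` is the Alekseev–Torossian connection (its symbol relation to
`Ω₁^π, Ω₂^π`, i.e. statement 11, is the hypothesis `hsymb`).

Modelling: everything is written as an identity of formal generating series in the big
power series ring with four blocks of variables: `x¹, x²` (the coordinates on `X = g*`
of the two tensor slots of `Ŝ(g) ⊗̂ Ŝ(g)`) and `y₁, y₂` (the formal arguments of the
exponentials), i.e. `MvPowerSeries Var4 K` with
`Var4 = (Fin d ⊕ Fin d) ⊕ (Fin d ⊕ Fin d)`.  The factor `e^{y₁} ⊗ e^{y₂}` is the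
series `EE = exp(Σᵢ x¹ᵢ y₁ᵢ + Σᵢ x²ᵢ y₂ᵢ)`.  One has
`[π,e^{y₁}]_i = Σ_{j,k} c j i k x¹_k y₁_j e^{y₁}` and
`∂^{m}(x_k e^{y}) = (x_k y^m + m_k y^{m−e_k}) e^{y}`, which gives the closed form
`hamExpTerm` for the application of the operator part `∂^{m₁} ⊗ ∂^{m₂}` of `Ω₁^π` to
`([π,e^{y₁}], e^{y₂})`; `⟨v,∂_{y₁}⟩e^{y₁} = (Σ_q x¹_q v_q)e^{y₁}`, and
`tr_g(ad(y₁)∂_{y₁}ω₁)` is computed with the formal partial derivatives `pdBig` in the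
`y₁`-variables.  All identities are stated coefficientwise (`∀ M`), which makes every
sum finitely supported.
-/

/-- Four blocks of formal variables: `x¹, x²` (inl) and `y₁, y₂` (inr). -/
abbrev Var4 (d : ℕ) := (Fin d ⊕ Fin d) ⊕ (Fin d ⊕ Fin d)

def xv1 {d : ℕ} (i : Fin d) : Var4 d := Sum.inl (Sum.inl i)
def xv2 {d : ℕ} (i : Fin d) : Var4 d := Sum.inl (Sum.inr i)
def yv1 {d : ℕ} (i : Fin d) : Var4 d := Sum.inr (Sum.inl i)
def yv2 {d : ℕ} (i : Fin d) : Var4 d := Sum.inr (Sum.inr i)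

/-- Formal exponential of a multivariate power series (coefficientwise finite formula;
it is the exponential when the constant term of `f` vanishes). -/
noncomputable def formalExp {σ K : Type*} [Field K] (f : MvPowerSeries σ K) :
    MvPowerSeries σ K :=
  fun M => ∑ n ∈ Finset.range (M.sum (fun _ k => k) + 1),
    (n.factorial : K)⁻¹ * MvPowerSeries.coeff M (f ^ n)

/-- Formal partial derivative `∂/∂X_v` of a multivariate power series. -/
noncomputable def pdBig {σ K : Type*} [Field K] (v : σ) (f : MvPowerSeries σ K) :
    MvPowerSeries σ K :=
  fun M => ((M v + 1 : ℕ) : K) * MvPowerSeries.coeff (M + Finsupp.single v 1) f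

/-- Embedding of a series in the variables `(y₁, y₂)` into the big ring. -/
noncomputable def embY {K : Type*} [Field K] {d : ℕ}
    (f : MvPowerSeries (Fin d ⊕ Fin d) K) : MvPowerSeries (Var4 d) K := by
  classical
  exact fun M =>
    if (∀ v : Fin d ⊕ Fin d, M (Sum.inl v) = 0) then
      f (Finsupp.comapDomain Sum.inr M (Sum.inr_injective.injOn)) else 0

/-- The monomial `y₁^m`, resp. `y₂^m`. -/
noncomputable def Ymon1 {K : Type*} [Field K] {d : ℕ} (m : Fin d →₀ ℕ) :
    MvPowerSeries (Var4 d) K :=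
  MvPowerSeries.monomial (Finsupp.mapDomain (fun i : Fin d => yv1 i) m) 1

noncomputable def Ymon2 {K : Type*} [Field K] {d : ℕ} (m : Fin d →₀ ℕ) :
    MvPowerSeries (Var4 d) K :=
  MvPowerSeries.monomial (Finsupp.mapDomain (fun i : Fin d => yv2 i) m) 1

/-- `e^{y₁} ⊗ e^{y₂} = exp(Σᵢ x¹ᵢ y₁ᵢ + Σᵢ x²ᵢ y₂ᵢ)`. -/
noncomputable def EE (K : Type*) [Field K] (d : ℕ) : MvPowerSeries (Var4 d) K :=
  formalExp (∑ i, MvPowerSeries.X (xv1 i) * MvPowerSeries.X (yv1 i) +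
             ∑ i, MvPowerSeries.X (xv2 i) * MvPowerSeries.X (yv2 i))

/-- The multi-exponent `(m₁, m₂)` as a multi-exponent in the `y`-variables. -/
noncomputable def joinMM {d : ℕ} (mm : (Fin d →₀ ℕ) × (Fin d →₀ ℕ)) :
    (Fin d ⊕ Fin d) →₀ ℕ :=
  mm.1.mapDomain Sum.inl + mm.2.mapDomain Sum.inr

/-!
Both sides are linear in the symbols `ω_i`. The operator `hamiltonianOp` turns the symbol `y^m`
of `Ω_i^π` into its value on the Hamiltonian vector field, so the left side is
`Σ_m coeff_m(ω_i) · L_i(y^m)` for a linear map `L_i`. Every coefficient of `L_i G` depends on only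
finitely many coefficients of `G`, hence this sum is `L_i(ω_i)`; re-indexing the sums over the
structure constants turns `Σ_i L_i(ω_i)` into the right side.
-/

section

open MvPowerSeries Finset

section FinitelyDetermined

variable {σ τ K : Type*} [Field K]

/-- Equivalently: the linear maps continuous for the product topologies, `K` being discrete. -/
def finitelyDetermined : Submodule K (MvPowerSeries σ K →ₗ[K] MvPowerSeries τ K) where
  carrier := {L | ∀ N, ∃ S : Finset (σ →₀ ℕ), ∀ G, (∀ n ∈ S, coeff n G = 0) → coeff N (L G) = 0}
  zero_mem' _ := ⟨∅, fun _ _ => by simp⟩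
  add_mem' {L₁ L₂} h₁ h₂ N := by
    classical
    obtain ⟨S₁, hS₁⟩ := h₁ N
    obtain ⟨S₂, hS₂⟩ := h₂ N
    refine ⟨S₁ ∪ S₂, fun G hG => ?_⟩
    rw [LinearMap.add_apply, map_add, hS₁ G fun n hn => hG n (mem_union_left _ hn),
      hS₂ G fun n hn => hG n (mem_union_right _ hn), add_zero]
  smul_mem' a L h N := by
    obtain ⟨S, hS⟩ := h N
    exact ⟨S, fun G hG => by rw [LinearMap.smul_apply, map_smul, hS G hG, smul_zero]⟩

theorem comp_mem_finitelyDetermined {ρ : Type*}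
    {L₂ : MvPowerSeries τ K →ₗ[K] MvPowerSeries ρ K}
    {L₁ : MvPowerSeries σ K →ₗ[K] MvPowerSeries τ K}
    (h₂ : L₂ ∈ finitelyDetermined) (h₁ : L₁ ∈ finitelyDetermined) :
    L₂ ∘ₗ L₁ ∈ finitelyDetermined := by
  classical
  intro N
  obtain ⟨S₂, hS₂⟩ := h₂ N
  choose S₁ hS₁ using h₁
  exact ⟨S₂.biUnion S₁, fun G hG => hS₂ _ fun n hn =>
    hS₁ n G fun m hm => hG m (mem_biUnion.2 ⟨n, hn, hm⟩)⟩

theorem mulLeft_mem_finitelyDetermined (A : MvPowerSeries σ K) :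
    LinearMap.mulLeft K A ∈ finitelyDetermined := by
  classical
  intro N
  refine ⟨(antidiagonal N).image Prod.snd, fun G hG => ?_⟩
  rw [LinearMap.mulLeft_apply, coeff_mul]
  exact sum_eq_zero fun p hp => by rw [hG p.2 (mem_image_of_mem _ hp), mul_zero]

theorem mulRight_mem_finitelyDetermined (A : MvPowerSeries σ K) :
    LinearMap.mulRight K A ∈ finitelyDetermined := by
  convert mulLeft_mem_finitelyDetermined A using 1
  ext G : 1
  exact mul_comm G A

theorem rename_mem_finitelyDetermined (f : σ → τ) [Filter.TendstoCofinite f] :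
    (rename f).toLinearMap ∈ finitelyDetermined (K := K) := by
  intro N
  refine ⟨(Filter.TendstoCofinite.finite_preimage_singleton (Finsupp.mapDomain f) N).toFinset,
    fun G hG => ?_⟩
  rw [AlgHom.toLinearMap_apply, coeff_rename]
  exact sum_eq_zero hG

theorem finsum_coeff_mul_coeff_monomial {L : MvPowerSeries σ K →ₗ[K] MvPowerSeries τ K}
    (hL : L ∈ finitelyDetermined) (F : MvPowerSeries σ K) (N : τ →₀ ℕ) :
    (Function.support fun n => coeff n F * coeff N (L (monomial n 1))).Finite ∧
      ∑ᶠ n, coeff n F * coeff N (L (monomial n 1)) = coeff N (L F) := by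
  classical
  obtain ⟨S, hS⟩ := hL N
  have hsupp : (Function.support fun n => coeff n F * coeff N (L (monomial n 1))) ⊆ S := by
    intro n hn
    by_contra hnS
    exact hn <| mul_eq_zero_of_right _ <| hS _ fun m hm => by
      rw [coeff_monomial, if_neg (ne_of_mem_of_not_mem hm hnS)]
  have htrunc : coeff N (L F) = coeff N (L (∑ n ∈ S, monomial n (coeff n F))) := by
    rw [← sub_eq_zero, ← map_sub, ← map_sub]
    refine hS _ fun n hn => ?_
    rw [map_sub, map_sum, sum_eq_single_of_mem n hn fun m _ hmn => by
      rw [coeff_monomial, if_neg hmn.symm], coeff_monomial, if_pos rfl, sub_self]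
  refine ⟨S.finite_toSet.subset hsupp, ?_⟩
  rw [finsum_eq_sum_of_support_subset _ hsupp, htrunc, map_sum, map_sum]
  refine sum_congr rfl fun n _ => ?_
  have : monomial n (coeff n F) = coeff n F • monomial n (1 : K) := by
    rw [← map_smul, smul_eq_mul, mul_one]
  rw [this, map_smul, map_smul, smul_eq_mul]

theorem finsum_sum_coeff_mul_coeff_monomial {ι : Type*} [Fintype ι]
    {L : ι → MvPowerSeries σ K →ₗ[K] MvPowerSeries τ K} (hL : ∀ i, L i ∈ finitelyDetermined)
    (F : ι → MvPowerSeries σ K) (N : τ →₀ ℕ) :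
    ∑ᶠ n, ∑ i, coeff n (F i) * coeff N (L i (monomial n 1)) = ∑ i, coeff N (L i (F i)) := by
  rw [finsum_sum_comm _ _ fun i _ => (finsum_coeff_mul_coeff_monomial (hL i) (F i) N).1]
  exact sum_congr rfl fun i _ => (finsum_coeff_mul_coeff_monomial (hL i) (F i) N).2

end FinitelyDetermined

section Hamiltonian

variable {σ K : Type*} [Field K]

theorem coeff_pdBig (v : σ) (f : MvPowerSeries σ K) (N : σ →₀ ℕ) :
    coeff N (pdBig v f) = ((N v + 1 : ℕ) : K) * coeff (N + Finsupp.single v 1) f :=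
  rfl

noncomputable def pdBigLinearMap (v : σ) : MvPowerSeries σ K →ₗ[K] MvPowerSeries σ K where
  toFun := pdBig v
  map_add' f g := by ext N; simp only [coeff_pdBig, map_add, mul_add]
  map_smul' a f := by
    ext N
    simp only [coeff_pdBig, map_smul, smul_eq_mul, RingHom.id_apply]
    ring

theorem pdBigLinearMap_apply (v : σ) (f : MvPowerSeries σ K) :
    pdBigLinearMap v f = pdBig v f :=
  rfl

theorem pdBigLinearMap_mem_finitelyDetermined (v : σ) :
    pdBigLinearMap v ∈ finitelyDetermined (K := K) := fun N =>
  ⟨{N + Finsupp.single v 1}, fun G hG => by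
    rw [pdBigLinearMap_apply, coeff_pdBig, hG _ (mem_singleton_self _), mul_zero]⟩

theorem pdBig_monomial_one (v : σ) (n : σ →₀ ℕ) :
    pdBig v (monomial n (1 : K)) = (n v : K) • monomial (n - Finsupp.single v 1) 1 := by
  classical
  ext N
  rw [coeff_pdBig, coeff_smul, coeff_monomial, coeff_monomial]
  by_cases h : N + Finsupp.single v 1 = n
  · subst h
    simp
  · rw [if_neg h, mul_zero]
    rcases Nat.eq_zero_or_pos (n v) with hv | hv
    · rw [hv, Nat.cast_zero, zero_mul]
    · rw [if_neg, mul_zero]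
      rintro rfl
      exact h (tsub_add_cancel_of_le (Finsupp.single_le_iff.2 hv))

variable {ι : Type*} [Fintype ι]

/-- The operator `G ↦ Σ_{j,k} c j i k · y_j (x_k + ∂_{y_k}) G`.  Since
`∂^m (x_k e^{⟨x,y⟩}) = (x_k y^m + m_k y^{m - e_k}) e^{⟨x,y⟩}`, the operator with symbol `y^m`
sends the `i`-th component `Σ_{j,k} c j i k x_k y_j e^{⟨x,y⟩}` of `[π, e^{⟨x,y⟩}]` to
`hamiltonianOp c x y i (y^m) · e^{⟨x,y⟩}`. -/
noncomputable def hamiltonianOp (c : ι → ι → ι → K) (x y : ι → σ) (i : ι) :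
    MvPowerSeries σ K →ₗ[K] MvPowerSeries σ K :=
  ∑ j, ∑ k, c j i k •
    (LinearMap.mulLeft K (X (y j)) ∘ₗ (LinearMap.mulLeft K (X (x k)) + pdBigLinearMap (y k)))

theorem hamiltonianOp_apply (c : ι → ι → ι → K) (x y : ι → σ) (i : ι) (G : MvPowerSeries σ K) :
    hamiltonianOp c x y i G =
      ∑ j, ∑ k, c j i k • (X (y j) * (X (x k) * G + pdBig (y k) G)) := by
  simp only [hamiltonianOp, LinearMap.sum_apply, LinearMap.smul_apply, LinearMap.comp_apply,
    LinearMap.add_apply, LinearMap.mulLeft_apply, pdBigLinearMap_apply]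

theorem hamiltonianOp_mem_finitelyDetermined (c : ι → ι → ι → K) (x y : ι → σ) (i : ι) :
    hamiltonianOp c x y i ∈ finitelyDetermined :=
  Submodule.sum_mem _ fun _ _ => Submodule.sum_mem _ fun _ _ => Submodule.smul_mem _ _ <|
    comp_mem_finitelyDetermined (mulLeft_mem_finitelyDetermined _) <|
      add_mem (mulLeft_mem_finitelyDetermined _) (pdBigLinearMap_mem_finitelyDetermined _)

theorem sum_hamiltonianOp (c : ι → ι → ι → K) (x y : ι → σ) (G : ι → MvPowerSeries σ K) :
    ∑ i, hamiltonianOp c x y i (G i) =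
      ∑ q, X (x q) * (∑ i, ∑ j, c i j q • (X (y i) * G j)) +
        ∑ a, ∑ e, (∑ i, c i e a • X (y i)) * pdBig (y a) (G e) := by
  simp only [hamiltonianOp_apply, mul_add, smul_add, sum_add_distrib, Finset.mul_sum,
    Finset.sum_mul, mul_smul_comm, smul_mul_assoc]
  congr 1
  · simp_rw [mul_left_comm (X (x _))]
    rw [Finset.sum_comm]
    exact (sum_congr rfl fun _ _ => Finset.sum_comm).trans Finset.sum_comm
  · exact (sum_congr rfl fun _ _ => Finset.sum_comm).trans Finset.sum_comm

end Hamiltonian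

section Coordinates

variable {K : Type*} [Field K] {d : ℕ}

theorem embY_eq_rename (f : MvPowerSeries (Fin d ⊕ Fin d) K) :
    embY f = rename (Function.Embedding.inr : Fin d ⊕ Fin d ↪ Var4 d) f := by
  ext N
  by_cases h : ∀ v : Fin d ⊕ Fin d, N (Sum.inl v) = 0
  · have hN : Finsupp.embDomain .inr (Finsupp.comapDomain Sum.inr N Sum.inr_injective.injOn) = N :=
      Finsupp.embDomain_comapDomain fun v hv => by
        rcases v with v | v
        · exact absurd (h v) (Finsupp.mem_support_iff.1 hv)
        · exact ⟨v, rfl⟩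
    conv_rhs => rw [← hN, coeff_embDomain_rename]
    exact dif_pos h
  · refine (dif_neg h).trans (coeff_rename_eq_zero _ _ ?_).symm
    rintro ⟨w, rfl⟩
    exact h fun v => Finsupp.mapDomain_of_notMem_range _ _ (by simp)

theorem mapDomain_inr_joinMM (mm : (Fin d →₀ ℕ) × (Fin d →₀ ℕ)) :
    Finsupp.mapDomain (Sum.inr : Fin d ⊕ Fin d → Var4 d) (joinMM mm) =
      Finsupp.mapDomain yv1 mm.1 + Finsupp.mapDomain yv2 mm.2 := by
  rw [joinMM, Finsupp.mapDomain_add, ← Finsupp.mapDomain_comp, ← Finsupp.mapDomain_comp]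
  rfl

theorem rename_monomial_joinMM (mm : (Fin d →₀ ℕ) × (Fin d →₀ ℕ)) :
    rename (Function.Embedding.inr : Fin d ⊕ Fin d ↪ Var4 d) (monomial (joinMM mm) (1 : K)) =
      Ymon1 mm.1 * Ymon2 mm.2 := by
  rw [rename_monomial, Ymon1, Ymon2, monomial_mul_monomial, mul_one]
  exact congrArg (monomial · 1) (mapDomain_inr_joinMM mm)

theorem pdBig_monomial_mapDomain_add {σ α : Type*} {y : α → σ} (hy : Function.Injective y)
    (m : α →₀ ℕ) {R : σ →₀ ℕ} (k : α) (hR : R (y k) = 0) :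
    pdBig (y k) (monomial (Finsupp.mapDomain y m + R) (1 : K)) =
      (m k : K) • monomial (Finsupp.mapDomain y (m - Finsupp.single k 1) + R) 1 := by
  rw [pdBig_monomial_one, Finsupp.add_apply, hR, add_zero, Finsupp.mapDomain_apply hy]
  rcases Nat.eq_zero_or_pos (m k) with hk | hk
  · rw [hk, Nat.cast_zero, zero_smul, zero_smul]
  obtain ⟨m', rfl⟩ : ∃ m', m = m' + Finsupp.single k 1 :=
    ⟨m - Finsupp.single k 1, (tsub_add_cancel_of_le (Finsupp.single_le_iff.2 hk)).symm⟩
  rw [Finsupp.mapDomain_add, Finsupp.mapDomain_single, add_right_comm, add_tsub_cancel_right,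
    add_tsub_cancel_right]

theorem yv1_injective : Function.Injective (yv1 (d := d)) := fun _ _ h => by
  simpa [yv1] using h

theorem yv2_injective : Function.Injective (yv2 (d := d)) := fun _ _ h => by
  simpa [yv2] using h

theorem pdBig_yv1_Ymon1_mul_Ymon2 (m₁ m₂ : Fin d →₀ ℕ) (k : Fin d) :
    pdBig (yv1 k) (Ymon1 m₁ * Ymon2 m₂ : MvPowerSeries (Var4 d) K) =
      (m₁ k : K) • (Ymon1 (m₁ - Finsupp.single k 1) * Ymon2 m₂) := by
  simp only [Ymon1, Ymon2, monomial_mul_monomial, mul_one]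
  exact pdBig_monomial_mapDomain_add yv1_injective m₁ k
    (Finsupp.mapDomain_of_notMem_range _ _ (by simp [yv1, yv2]))

theorem pdBig_yv2_Ymon1_mul_Ymon2 (m₁ m₂ : Fin d →₀ ℕ) (k : Fin d) :
    pdBig (yv2 k) (Ymon1 m₁ * Ymon2 m₂ : MvPowerSeries (Var4 d) K) =
      (m₂ k : K) • (Ymon1 m₁ * Ymon2 (m₂ - Finsupp.single k 1)) := by
  simp only [Ymon1, Ymon2, monomial_mul_monomial, mul_one]
  rw [add_comm, add_comm (Finsupp.mapDomain yv1 m₁)]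
  exact pdBig_monomial_mapDomain_add yv2_injective m₂ k
    (Finsupp.mapDomain_of_notMem_range _ _ (by simp [yv1, yv2]))

theorem hamiltonianOp_xv1_yv1_Ymon1_mul_Ymon2 (c : Fin d → Fin d → Fin d → K) (i : Fin d)
    (m₁ m₂ : Fin d →₀ ℕ) :
    hamiltonianOp c xv1 yv1 i (Ymon1 m₁ * Ymon2 m₂) =
      (∑ j, ∑ k, c j i k • (X (yv1 j) * (X (xv1 k) * Ymon1 m₁ +
        ((m₁ k : ℕ) : K) • Ymon1 (m₁ - Finsupp.single k 1)))) * Ymon2 m₂ := by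
  simp only [hamiltonianOp_apply, pdBig_yv1_Ymon1_mul_Ymon2, Finset.sum_mul, smul_mul_assoc,
    mul_assoc, add_mul]

theorem hamiltonianOp_xv2_yv2_Ymon1_mul_Ymon2 (c : Fin d → Fin d → Fin d → K) (i : Fin d)
    (m₁ m₂ : Fin d →₀ ℕ) :
    hamiltonianOp c xv2 yv2 i (Ymon1 m₁ * Ymon2 m₂) =
      Ymon1 m₁ * (∑ j, ∑ k, c j i k • (X (yv2 j) * (X (xv2 k) * Ymon2 m₂ +
        ((m₂ k : ℕ) : K) • Ymon2 (m₂ - Finsupp.single k 1)))) := by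
  simp only [hamiltonianOp_apply, pdBig_yv2_Ymon1_mul_Ymon2, Finset.mul_sum, mul_smul_comm,
    mul_add, mul_left_comm (Ymon1 m₁)]

theorem joinMM_eq_sumFinsuppEquivProdFinsupp_symm (mm : (Fin d →₀ ℕ) × (Fin d →₀ ℕ)) :
    joinMM mm = Finsupp.sumFinsuppEquivProdFinsupp.symm mm := by
  ext (v | v) <;> simp [joinMM, Finsupp.mapDomain_apply Sum.inl_injective,
    Finsupp.mapDomain_apply Sum.inr_injective, Finsupp.mapDomain_of_notMem_range]

theorem finsum_coeff_joinMM_mul_coeff_hamiltonianOp (c : Fin d → Fin d → Fin d → K)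
    (x y : Fin d → Var4 d) (ω : Fin d → MvPowerSeries (Fin d ⊕ Fin d) K)
    (E : MvPowerSeries (Var4 d) K) (M : Var4 d →₀ ℕ) :
    ∑ᶠ mm : (Fin d →₀ ℕ) × (Fin d →₀ ℕ), ∑ i, coeff (joinMM mm) (ω i) *
        coeff M (hamiltonianOp c x y i (Ymon1 mm.1 * Ymon2 mm.2) * E) =
      coeff M ((∑ i, hamiltonianOp c x y i (embY (ω i))) * E) := by
  let L i := LinearMap.mulRight K E ∘ₗ hamiltonianOp c x y i ∘ₗ
    (rename (Function.Embedding.inr : Fin d ⊕ Fin d ↪ Var4 d)).toLinearMap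
  have hL i : L i ∈ finitelyDetermined :=
    comp_mem_finitelyDetermined (mulRight_mem_finitelyDetermined E) <|
      comp_mem_finitelyDetermined (hamiltonianOp_mem_finitelyDetermined c x y i)
        (rename_mem_finitelyDetermined _)
  calc _ = ∑ᶠ mm, ∑ i, coeff (Finsupp.sumFinsuppEquivProdFinsupp.symm mm) (ω i) *
          coeff M (L i (monomial (Finsupp.sumFinsuppEquivProdFinsupp.symm mm) 1)) := by
        simp only [L, LinearMap.comp_apply, AlgHom.toLinearMap_apply, LinearMap.mulRight_apply,
          ← joinMM_eq_sumFinsuppEquivProdFinsupp_symm, rename_monomial_joinMM]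
    _ = ∑ᶠ n, ∑ i, coeff n (ω i) * coeff M (L i (monomial n 1)) :=
        finsum_comp_equiv (f := fun n => ∑ i, coeff n (ω i) * coeff M (L i (monomial n 1))) _
    _ = ∑ i, coeff M (L i (ω i)) := finsum_sum_coeff_mul_coeff_monomial hL ω M
    _ = _ := by
        simp only [L, LinearMap.comp_apply, AlgHom.toLinearMap_apply, LinearMap.mulRight_apply,
          embY_eq_rename, Finset.sum_mul, map_sum]

end Coordinates

end

theorem statement_12_general
    (K : Type*) [Field K]
    (d : ℕ)
    (c : Fin d → Fin d → Fin d → K)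
    -- the set of points of `C⁺_{2,0}` (its open part, `ℍ ∖ {i}`)
    (Conf20 : Set ℂ)
    -- the `1`-forms `Ω₁^π`, `Ω₂^π` of Theorem 2, in coordinates
    (Ω₁ Ω₂ : ℂ → ℂ → (Fin d → ((Fin d →₀ ℕ) × (Fin d →₀ ℕ)) → K))
    -- the Alekseev–Torossian connection `(ω₁, ω₂)`, a `1`-form on `C⁺_{2,0}` with
    -- values in `tder₂` (pairs of formal Lie series in `(y₁,y₂)`, in coordinates)
    (ω₁ ω₂ : ℂ → ℂ → (Fin d → MvPowerSeries (Fin d ⊕ Fin d) K))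
    -- statement 11: the symbols of `Ω₁^π, Ω₂^π` are given by `(ω₁, ω₂)`
    (hsymb₁ : ∀ p ∈ Conf20, ∀ (v : ℂ) (i : Fin d) (mm : (Fin d →₀ ℕ) × (Fin d →₀ ℕ)),
      Ω₁ p v i mm = MvPowerSeries.coeff (joinMM mm) (ω₁ p v i))
    (hsymb₂ : ∀ p ∈ Conf20, ∀ (v : ℂ) (i : Fin d) (mm : (Fin d →₀ ℕ) × (Fin d →₀ ℕ)),
      Ω₂ p v i mm = MvPowerSeries.coeff (joinMM mm) (ω₂ p v i)) :
    ∀ p ∈ Conf20, ∀ (v : ℂ) (M : Var4 d →₀ ℕ),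
      -- `Ω₁^π([π,e^{y₁}], e^{y₂}) = ⟨[y₁,ω₁],∂_{y₁}⟩(e^{y₁}) ⊗ e^{y₂}
      --                            + tr_g(ad(y₁)∂_{y₁}ω₁) e^{y₁} ⊗ e^{y₂}`
      ((∑ᶠ mm : (Fin d →₀ ℕ) × (Fin d →₀ ℕ), ∑ i : Fin d,
        Ω₁ p v i mm *
          MvPowerSeries.coeff M
            ((∑ j, ∑ k, c j i k •
              (MvPowerSeries.X (yv1 j) *
                (MvPowerSeries.X (xv1 k) * Ymon1 mm.1 +
                  ((mm.1 k : ℕ) : K) • Ymon1 (mm.1 - Finsupp.single k 1)))) *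
              Ymon2 mm.2 * EE K d))
      =
      MvPowerSeries.coeff M
        (((∑ q, MvPowerSeries.X (xv1 q) *
            (∑ i, ∑ j, c i j q • (MvPowerSeries.X (yv1 i) * embY (ω₁ p v j))))
          +
          (∑ a, ∑ e, (∑ i, c i e a • MvPowerSeries.X (yv1 i)) *
            pdBig (yv1 a) (embY (ω₁ p v e))))
          * EE K d))
      ∧
      -- `Ω₂^π(e^{y₁}, [π,e^{y₂}]) = e^{y₁} ⊗ ⟨[y₂,ω₂],∂_{y₂}⟩(e^{y₂})
      --                            + tr_g(ad(y₂)∂_{y₂}ω₂) e^{y₁} ⊗ e^{y₂}`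
      ((∑ᶠ mm : (Fin d →₀ ℕ) × (Fin d →₀ ℕ), ∑ i : Fin d,
        Ω₂ p v i mm *
          MvPowerSeries.coeff M
            (Ymon1 mm.1 *
              (∑ j, ∑ k, c j i k •
                (MvPowerSeries.X (yv2 j) *
                  (MvPowerSeries.X (xv2 k) * Ymon2 mm.2 +
                    ((mm.2 k : ℕ) : K) • Ymon2 (mm.2 - Finsupp.single k 1)))) * EE K d))
      =
      MvPowerSeries.coeff M
        (((∑ q, MvPowerSeries.X (xv2 q) *
            (∑ i, ∑ j, c i j q • (MvPowerSeries.X (yv2 i) * embY (ω₂ p v j))))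
          +
          (∑ a, ∑ e, (∑ i, c i e a • MvPowerSeries.X (yv2 i)) *
            pdBig (yv2 a) (embY (ω₂ p v e))))
          * EE K d)) := by
  intro p hp v M
  constructor
  · rw [← sum_hamiltonianOp c xv1 yv1 fun j => embY (ω₁ p v j),
      ← finsum_coeff_joinMM_mul_coeff_hamiltonianOp]
    simp only [hsymb₁ p hp v, hamiltonianOp_xv1_yv1_Ymon1_mul_Ymon2]
  · rw [← sum_hamiltonianOp c xv2 yv2 fun j => embY (ω₂ p v j),
      ← finsum_coeff_joinMM_mul_coeff_hamiltonianOp]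
    simp only [hsymb₂ p hp v, hamiltonianOp_xv2_yv2_Ymon1_mul_Ymon2]

theorem statement_12
    (K : Type*) [Field K] [Algebra ℂ K]
    (d : ℕ)
    (g : Type*) [LieRing g] [LieAlgebra K g]
    (b : Module.Basis (Fin d) K g) (c : Fin d → Fin d → Fin d → K)
    (hc : ∀ i j, ⁅b i, b j⁆ = ∑ k, c i j k • b k)
    -- the set of points of `C⁺_{2,0}` (its open part, `ℍ ∖ {i}`)
    (Conf20 : Set ℂ)
    (hConf : Conf20 = {z : ℂ | 0 < z.im ∧ z ≠ Complex.I})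
    -- the `1`-forms `Ω₁^π`, `Ω₂^π` of Theorem 2, in coordinates
    (Ω₁ Ω₂ : ℂ → ℂ → (Fin d → ((Fin d →₀ ℕ) × (Fin d →₀ ℕ)) → K))
    -- the Alekseev–Torossian connection `(ω₁, ω₂)`, a `1`-form on `C⁺_{2,0}` with
    -- values in `tder₂` (pairs of formal Lie series in `(y₁,y₂)`, in coordinates)
    (ω₁ ω₂ : ℂ → ℂ → (Fin d → MvPowerSeries (Fin d ⊕ Fin d) K))
    -- statement 11: the symbols of `Ω₁^π, Ω₂^π` are given by `(ω₁, ω₂)`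
    (hsymb₁ : ∀ p ∈ Conf20, ∀ (v : ℂ) (i : Fin d) (mm : (Fin d →₀ ℕ) × (Fin d →₀ ℕ)),
      Ω₁ p v i mm = MvPowerSeries.coeff (joinMM mm) (ω₁ p v i))
    (hsymb₂ : ∀ p ∈ Conf20, ∀ (v : ℂ) (i : Fin d) (mm : (Fin d →₀ ℕ) × (Fin d →₀ ℕ)),
      Ω₂ p v i mm = MvPowerSeries.coeff (joinMM mm) (ω₂ p v i)) :
    ∀ p ∈ Conf20, ∀ (v : ℂ) (M : Var4 d →₀ ℕ),
      -- `Ω₁^π([π,e^{y₁}], e^{y₂}) = ⟨[y₁,ω₁],∂_{y₁}⟩(e^{y₁}) ⊗ e^{y₂}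
      --                            + tr_g(ad(y₁)∂_{y₁}ω₁) e^{y₁} ⊗ e^{y₂}`
      ((∑ᶠ mm : (Fin d →₀ ℕ) × (Fin d →₀ ℕ), ∑ i : Fin d,
        Ω₁ p v i mm *
          MvPowerSeries.coeff M
            ((∑ j, ∑ k, c j i k •
              (MvPowerSeries.X (yv1 j) *
                (MvPowerSeries.X (xv1 k) * Ymon1 mm.1 +
                  ((mm.1 k : ℕ) : K) • Ymon1 (mm.1 - Finsupp.single k 1)))) *
              Ymon2 mm.2 * EE K d))
      =
      MvPowerSeries.coeff M
        (((∑ q, MvPowerSeries.X (xv1 q) *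
            (∑ i, ∑ j, c i j q • (MvPowerSeries.X (yv1 i) * embY (ω₁ p v j))))
          +
          (∑ a, ∑ e, (∑ i, c i e a • MvPowerSeries.X (yv1 i)) *
            pdBig (yv1 a) (embY (ω₁ p v e))))
          * EE K d))
      ∧
      -- `Ω₂^π(e^{y₁}, [π,e^{y₂}]) = e^{y₁} ⊗ ⟨[y₂,ω₂],∂_{y₂}⟩(e^{y₂})
      --                            + tr_g(ad(y₂)∂_{y₂}ω₂) e^{y₁} ⊗ e^{y₂}`
      ((∑ᶠ mm : (Fin d →₀ ℕ) × (Fin d →₀ ℕ), ∑ i : Fin d,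
        Ω₂ p v i mm *
          MvPowerSeries.coeff M
            (Ymon1 mm.1 *
              (∑ j, ∑ k, c j i k •
                (MvPowerSeries.X (yv2 j) *
                  (MvPowerSeries.X (xv2 k) * Ymon2 mm.2 +
                    ((mm.2 k : ℕ) : K) • Ymon2 (mm.2 - Finsupp.single k 1)))) * EE K d))
      =
      MvPowerSeries.coeff M
        (((∑ q, MvPowerSeries.X (xv2 q) *
            (∑ i, ∑ j, c i j q • (MvPowerSeries.X (yv2 i) * embY (ω₂ p v j))))
          +
          (∑ a, ∑ e, (∑ i, c i e a • MvPowerSeries.X (yv2 i)) *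
            pdBig (yv2 a) (embY (ω₂ p v e))))
          * EE K d)) :=
  statement_12_general K d c Conf20 Ω₁ Ω₂ ω₁ ω₂ hsymb₁ hsymb₂
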